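/- arXiv:1407.0579 — 3 statements merged into one kernel-verified Lean document; each statement's English description precedes it below -/
import Mathlib

section
/- Hook Relation: Let A be a sequence of distinct reals with EST points t_i = (a_i^+, a_i^-). Suppose i < j and there exists a natural number x with a_i^+ ≤ x ≤ a_j^+ such that no index k ≤ j satisfies a_k^+ = x and a_k^- > a_i^-. Then a_i < a_j. -/
/-- Length of the longest strictly increasing subsequence of `a` ending at index `i`. -/
noncomputable def incLen {n : ℕ} (a : Fin n → ℝ) (i : Fin n) : ℕ :=
  sSup {m | ∃ σ : Fin (m + 1) → Fin n,
    StrictMono σ ∧ StrictMono (a ∘ σ) ∧ σ (Fin.last m) = i} + 1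

/-- Length of the longest strictly decreasing subsequence of `a` ending at index `i`. -/
noncomputable def decLen {n : ℕ} (a : Fin n → ℝ) (i : Fin n) : ℕ :=
  sSup {m | ∃ σ : Fin (m + 1) → Fin n,
    StrictMono σ ∧ StrictAnti (a ∘ σ) ∧ σ (Fin.last m) = i} + 1

/-!
Suppose instead `a j < a i`. Walking down a longest increasing subsequence ending at `j`, whose
`incLen` values drop by exactly one at each step, we find `k ≤ j` with `a k ≤ a j` and
`incLen a k = x`. Then `a k < a i`: if `k < i` this forces `incLen a k < incLen a i ≤ x`, and if
`i < k` it forces `decLen a k > decLen a i`, so `k` is a point the hypothesis excludes.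
-/

theorem Fin.strictMono_snoc {α : Type*} [Preorder α] {m : ℕ} {f : Fin (m + 1) → α} {x : α}
    (hf : StrictMono f) (hx : f (Fin.last m) < x) :
    StrictMono (Fin.snoc f x : Fin (m + 2) → α) := by
  rw [Fin.strictMono_iff_lt_succ]
  intro p
  induction p using Fin.lastCases with
  | last =>
    rw [Fin.succ_last, Fin.snoc_last, Fin.snoc_castSucc]
    exact (hf.monotone (Fin.le_last _)).trans_lt hx
  | cast q =>
    simp only [Fin.succ_castSucc, Fin.snoc_castSucc]
    exact hf Fin.castSucc_lt_succ

section IncreasingSubsequences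

variable {n : ℕ} (a : Fin n → ℝ)

/-- `m` is in this set iff some increasing subsequence of length `m + 1` ends at `i`. -/
def incLenSet (i : Fin n) : Set ℕ :=
  {m | ∃ σ : Fin (m + 1) → Fin n, StrictMono σ ∧ StrictMono (a ∘ σ) ∧ σ (Fin.last m) = i}

theorem incLen_eq_sSup_incLenSet (i : Fin n) : incLen a i = sSup (incLenSet a i) + 1 := rfl

theorem one_le_incLen (i : Fin n) : 1 ≤ incLen a i := Nat.le_add_left 1 _

theorem bddAbove_incLenSet (i : Fin n) : BddAbove (incLenSet a i) :=
  ⟨n, fun _ ⟨σ, hσ, _⟩ => le_of_lt (by simpa using Fintype.card_le_of_injective σ hσ.injective)⟩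

theorem succ_le_incLen {i : Fin n} {m : ℕ} (σ : Fin (m + 1) → Fin n) (hσ : StrictMono σ)
    (haσ : StrictMono (a ∘ σ)) (hσi : σ (Fin.last m) = i) : m + 1 ≤ incLen a i :=
  Nat.add_le_add_right (le_csSup (bddAbove_incLenSet a i) ⟨σ, hσ, haσ, hσi⟩) 1

theorem exists_strictMono_of_incLen_eq {i : Fin n} {m : ℕ} (h : incLen a i = m + 1) :
    ∃ σ : Fin (m + 1) → Fin n, StrictMono σ ∧ StrictMono (a ∘ σ) ∧ σ (Fin.last m) = i := by
  have hm : sSup (incLenSet a i) = m := by rw [incLen_eq_sSup_incLenSet] at h; omega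
  have : Subsingleton (Fin (0 + 1)) := Fin.subsingleton_one
  have hne : (incLenSet a i).Nonempty :=
    ⟨0, fun _ => i, Subsingleton.strictMono _, Subsingleton.strictMono _, rfl⟩
  exact hm ▸ Nat.sSup_mem hne (bddAbove_incLenSet a i)

theorem incLen_lt_incLen {k j : Fin n} (hkj : k < j) (hakj : a k < a j) :
    incLen a k < incLen a j := by
  obtain ⟨m, hm⟩ : ∃ m, incLen a k = m + 1 := ⟨_, rfl⟩
  obtain ⟨σ, hσ, haσ, hσk⟩ := exists_strictMono_of_incLen_eq a hm
  rw [hm]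
  refine succ_le_incLen a (Fin.snoc σ j) (Fin.strictMono_snoc hσ (hσk ▸ hkj)) ?_ (by simp)
  rw [Fin.comp_snoc]
  exact Fin.strictMono_snoc haσ (by simpa [hσk] using hakj)

theorem exists_incLen_eq_of_incLen_eq_succ {j : Fin n} {m : ℕ} (h : incLen a j = m + 1)
    (hm : m ≠ 0) : ∃ k < j, a k < a j ∧ incLen a k = m := by
  obtain ⟨m, rfl⟩ := Nat.exists_eq_succ_of_ne_zero hm
  obtain ⟨σ, hσ, haσ, hσj⟩ := exists_strictMono_of_incLen_eq a h
  have hkj : σ (Fin.last m).castSucc < j := hσj ▸ hσ (Fin.castSucc_lt_last _)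
  have hakj : a (σ (Fin.last m).castSucc) < a j := hσj ▸ haσ (Fin.castSucc_lt_last _)
  have hle : m + 1 ≤ incLen a (σ (Fin.last m).castSucc) :=
    succ_le_incLen a (σ ∘ Fin.castSucc) (hσ.comp Fin.strictMono_castSucc)
      (haσ.comp Fin.strictMono_castSucc) rfl
  have hlt := incLen_lt_incLen a hkj hakj
  exact ⟨_, hkj, hakj, by omega⟩

theorem exists_le_incLen_eq {j : Fin n} {x : ℕ} (hx : 1 ≤ x) (hxj : x ≤ incLen a j) :
    ∃ k ≤ j, a k ≤ a j ∧ incLen a k = x := by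
  obtain ⟨d, hd⟩ := Nat.exists_eq_add_of_le hxj
  clear hxj
  induction d generalizing j with
  | zero => exact ⟨j, le_rfl, le_rfl, hd⟩
  | succ d ih =>
    obtain ⟨k, hkj, hakj, hk⟩ := exists_incLen_eq_of_incLen_eq_succ a (m := x + d) hd (by omega)
    obtain ⟨l, hlk, halk, hl⟩ := ih hk
    exact ⟨l, hlk.trans hkj.le, halk.trans hakj.le, hl⟩

theorem decLen_eq_incLen_neg : decLen a = incLen (-a) := by
  funext i
  simp only [decLen, incLen]
  congr 2
  ext m
  refine exists_congr fun σ => and_congr_right fun _ => and_congr_left fun _ => ?_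
  exact ⟨StrictAnti.neg, fun h => by simpa [Function.comp_def] using h.neg⟩

theorem decLen_lt_decLen {k j : Fin n} (hkj : k < j) (hajk : a j < a k) :
    decLen a k < decLen a j := by
  rw [decLen_eq_incLen_neg]
  exact incLen_lt_incLen (-a) hkj (neg_lt_neg hajk)

end IncreasingSubsequences

theorem hook_relation {n : ℕ} (a : Fin n → ℝ) (ha : Function.Injective a)
    (i j : Fin n) (hij : i < j) (x : ℕ)
    (hx1 : incLen a i ≤ x) (hx2 : x ≤ incLen a j)
    (hempty : ∀ k : Fin n, k ≤ j → ¬(incLen a k = x ∧ decLen a k > decLen a i)) :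
    a i < a j := by
  by_contra! hji
  have hji : a j < a i := hji.lt_of_ne (ha.ne hij.ne')
  obtain ⟨k, hkj, hakj, hkx⟩ := exists_le_incLen_eq a ((one_le_incLen a i).trans hx1) hx2
  have haki : a k < a i := hakj.trans_lt hji
  rcases lt_trichotomy k i with hki | rfl | hik
  · exact (incLen_lt_incLen a hki haki).not_ge (hkx ▸ hx1)
  · exact haki.false
  · exact hempty k hkj ⟨hkx, decLen_lt_decLen a hik haki⟩
end

section
/- No-Backward-Placement: Let A be a sequence of distinct reals with EST points t_i = (a_i^+, a_i^-). If i < j, then there is no k ≤ i such that either (a_j^- = a_k^- and a_j^+ < a_k^+) or (a_j^+ = a_k^+ and a_j^- < a_k^-). More generally, t_j does not lie in the shadow of the first i points: there is no k ≤ i with a_j^+ ≤ a_k^+ and a_j^- = a_k^-, nor with a_j^- ≤ a_k^- and a_j^+ = a_k^+, unless j = k. -/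
lemma snoc_strictMono {m : ℕ} {α : Type*} [LinearOrder α] {f : Fin (m + 1) → α} {x : α}
    (hf : StrictMono f) (hx : f (Fin.last m) < x) : StrictMono (Fin.snoc f x) := by
  intro u v huv
  rcases Fin.eq_castSucc_or_eq_last v with ⟨w, rfl⟩ | rfl
  · rcases Fin.eq_castSucc_or_eq_last u with ⟨u', rfl⟩ | rfl
    · simp only [Fin.snoc_castSucc]
      exact hf (by exact_mod_cast huv)
    · exact absurd (huv.trans (Fin.castSucc_lt_last w)) (lt_irrefl _)
  · rcases Fin.eq_castSucc_or_eq_last u with ⟨u', rfl⟩ | rfl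
    · simp only [Fin.snoc_castSucc, Fin.snoc_last]
      exact lt_of_le_of_lt (hf.monotone (Fin.le_last u')) hx
    · exact absurd huv (lt_irrefl _)

lemma snoc_strictAnti {m : ℕ} {α : Type*} [LinearOrder α] {f : Fin (m + 1) → α} {x : α}
    (hf : StrictAnti f) (hx : x < f (Fin.last m)) : StrictAnti (Fin.snoc f x) := by
  intro u v huv
  rcases Fin.eq_castSucc_or_eq_last v with ⟨w, rfl⟩ | rfl
  · rcases Fin.eq_castSucc_or_eq_last u with ⟨u', rfl⟩ | rfl
    · simp only [Fin.snoc_castSucc]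
      exact hf (by exact_mod_cast huv)
    · exact absurd (huv.trans (Fin.castSucc_lt_last w)) (lt_irrefl _)
  · rcases Fin.eq_castSucc_or_eq_last u with ⟨u', rfl⟩ | rfl
    · simp only [Fin.snoc_castSucc, Fin.snoc_last]
      exact lt_of_lt_of_le hx (hf.antitone (Fin.le_last u'))
    · exact absurd huv (lt_irrefl _)

lemma incSet_nonempty {n : ℕ} (a : Fin n → ℝ) (k : Fin n) :
    Set.Nonempty {m | ∃ σ : Fin (m + 1) → Fin n,
      StrictMono σ ∧ StrictMono (a ∘ σ) ∧ σ (Fin.last m) = k} := by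
  have : Subsingleton (Fin (0 + 1)) := inferInstanceAs (Subsingleton (Fin 1))
  exact ⟨0, fun _ => k, Subsingleton.strictMono _, Subsingleton.strictMono _, rfl⟩

lemma decSet_nonempty {n : ℕ} (a : Fin n → ℝ) (k : Fin n) :
    Set.Nonempty {m | ∃ σ : Fin (m + 1) → Fin n,
      StrictMono σ ∧ StrictAnti (a ∘ σ) ∧ σ (Fin.last m) = k} := by
  have : Subsingleton (Fin (0 + 1)) := inferInstanceAs (Subsingleton (Fin 1))
  exact ⟨0, fun _ => k, Subsingleton.strictMono _, Subsingleton.strictAnti _, rfl⟩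

lemma incSet_bdd {n : ℕ} (a : Fin n → ℝ) (k : Fin n) :
    BddAbove {m | ∃ σ : Fin (m + 1) → Fin n,
      StrictMono σ ∧ StrictMono (a ∘ σ) ∧ σ (Fin.last m) = k} := by
  refine ⟨n, fun m hm => ?_⟩
  obtain ⟨σ, hσ, -, -⟩ := hm
  have := Fintype.card_le_of_injective σ hσ.injective
  simpa using Nat.le_of_succ_le (by simpa using this)

lemma decSet_bdd {n : ℕ} (a : Fin n → ℝ) (k : Fin n) :
    BddAbove {m | ∃ σ : Fin (m + 1) → Fin n,
      StrictMono σ ∧ StrictAnti (a ∘ σ) ∧ σ (Fin.last m) = k} := by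
  refine ⟨n, fun m hm => ?_⟩
  obtain ⟨σ, hσ, -, -⟩ := hm
  have := Fintype.card_le_of_injective σ hσ.injective
  simpa using Nat.le_of_succ_le (by simpa using this)

lemma incLen_lt {n : ℕ} (a : Fin n → ℝ) {k j : Fin n} (hkj : k < j) (h : a k < a j) :
    incLen a k < incLen a j := by
  unfold incLen
  set M := sSup {m | ∃ σ : Fin (m + 1) → Fin n,
      StrictMono σ ∧ StrictMono (a ∘ σ) ∧ σ (Fin.last m) = k} with hM
  have hmem : M ∈ {m | ∃ σ : Fin (m + 1) → Fin n,
      StrictMono σ ∧ StrictMono (a ∘ σ) ∧ σ (Fin.last m) = k} :=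
    Nat.sSup_mem (incSet_nonempty a k) (incSet_bdd a k)
  obtain ⟨τ, hτ, haτ, hlast⟩ := hmem
  have hmem' : M + 1 ∈ {m | ∃ σ : Fin (m + 1) → Fin n,
      StrictMono σ ∧ StrictMono (a ∘ σ) ∧ σ (Fin.last m) = j} := by
    refine ⟨Fin.snoc τ j, snoc_strictMono hτ (by rw [hlast]; exact hkj), ?_, Fin.snoc_last ..⟩
    rw [Fin.comp_snoc]
    exact snoc_strictMono haτ (by simpa [hlast] using h)
  have := le_csSup (incSet_bdd a j) hmem'
  exact Nat.succ_lt_succ (Nat.lt_of_succ_le this)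

lemma decLen_lt {n : ℕ} (a : Fin n → ℝ) {k j : Fin n} (hkj : k < j) (h : a j < a k) :
    decLen a k < decLen a j := by
  unfold decLen
  set M := sSup {m | ∃ σ : Fin (m + 1) → Fin n,
      StrictMono σ ∧ StrictAnti (a ∘ σ) ∧ σ (Fin.last m) = k} with hM
  have hmem : M ∈ {m | ∃ σ : Fin (m + 1) → Fin n,
      StrictMono σ ∧ StrictAnti (a ∘ σ) ∧ σ (Fin.last m) = k} :=
    Nat.sSup_mem (decSet_nonempty a k) (decSet_bdd a k)
  obtain ⟨τ, hτ, haτ, hlast⟩ := hmem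
  have hmem' : M + 1 ∈ {m | ∃ σ : Fin (m + 1) → Fin n,
      StrictMono σ ∧ StrictAnti (a ∘ σ) ∧ σ (Fin.last m) = j} := by
    refine ⟨Fin.snoc τ j, snoc_strictMono hτ (by rw [hlast]; exact hkj), ?_, Fin.snoc_last ..⟩
    rw [Fin.comp_snoc]
    exact snoc_strictAnti haτ (by simpa [hlast] using h)
  have := le_csSup (decSet_bdd a j) hmem'
  exact Nat.succ_lt_succ (Nat.lt_of_succ_le this)

theorem no_backward_placement {n : ℕ} (a : Fin n → ℝ) (ha : Function.Injective a)
    (i j : Fin n) (hij : i < j) (k : Fin n) (hk : k ≤ i) :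
    ¬(incLen a j ≤ incLen a k ∧ decLen a j = decLen a k) ∧
    ¬(decLen a j ≤ decLen a k ∧ incLen a j = incLen a k) := by
  have hkj : k < j := lt_of_le_of_lt hk hij
  have hne : a k ≠ a j := fun h => (ne_of_lt hkj) (ha h)
  rcases lt_or_gt_of_ne hne with h | h
  · have := incLen_lt a hkj h
    exact ⟨fun ⟨h1, _⟩ => by omega, fun ⟨_, h2⟩ => by omega⟩
  · have := decLen_lt a hkj h
    exact ⟨fun ⟨_, h2⟩ => by omega, fun ⟨h1, _⟩ => by omega⟩
end

section
/- The number of Erdős-Szekeres tableaux on n points is at least k^{n-k} for every k ≤ n: there are at least k^{n-k} distinct tuples ((a_1^+, a_1^-), ..., (a_n^+, a_n^-)) arising from permutations A of {1,...,n}. -/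
namespace ESTaux

variable {n k : ℕ}

/-- Level of position `i`: `i` for the first `k` positions, `f (i-k)` afterwards. -/
def lev (k : ℕ) {n : ℕ} (f : Fin (n - k) → Fin k) (i : Fin n) : ℕ :=
  if h : (i : ℕ) < k then (i : ℕ)
  else (f ⟨(i : ℕ) - k, by have := i.isLt; omega⟩ : ℕ)

lemma lev_lt (hk : 0 < k) (f : Fin (n - k) → Fin k) (i : Fin n) : lev k f i < k := by
  unfold lev
  split
  · assumption
  · exact (f _).isLt

/-- Sorting key: higher level means bigger value; within a level, later positions are smaller. -/
def key (k : ℕ) {n : ℕ} (f : Fin (n - k) → Fin k) (i : Fin n) : ℕ :=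
  lev k f i * n + (n - 1 - (i : ℕ))

lemma key_lt_of_lev_lt (f : Fin (n - k) → Fin k) {i j : Fin n}
    (h : lev k f i < lev k f j) : key k f i < key k f j := by
  have h1 : (lev k f i + 1) * n ≤ lev k f j * n :=
    Nat.mul_le_mul_right n (by omega)
  rw [add_mul, one_mul] at h1
  have hi := i.isLt
  unfold key
  omega

lemma lev_lt_of_key_lt (f : Fin (n - k) → Fin k) {i j : Fin n} (hij : i < j)
    (h : key k f i < key k f j) : lev k f i < lev k f j := by
  by_contra hc
  push_neg at hc
  have h1 : lev k f j * n ≤ lev k f i * n := Nat.mul_le_mul_right n hc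
  have h2 : (i : ℕ) < (j : ℕ) := hij
  have h3 := j.isLt
  unfold key at h
  omega

lemma key_ne (f : Fin (n - k) → Fin k) {i j : Fin n} (hij : i < j) :
    key k f i ≠ key k f j := by
  rcases lt_trichotomy (lev k f i) (lev k f j) with h | h | h
  · exact (key_lt_of_lev_lt f h).ne
  · have h2 : (i : ℕ) < (j : ℕ) := hij
    have h3 := j.isLt
    unfold key
    rw [h]
    omega
  · exact (key_lt_of_lev_lt f h).ne'

lemma key_inj (f : Fin (n - k) → Fin k) : Function.Injective (key k f) := by
  intro i j h
  rcases lt_trichotomy i j with hij | hij | hij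
  · exact absurd h (key_ne f hij)
  · exact hij
  · exact absurd h.symm (key_ne f hij)

noncomputable def sortIso (k : ℕ) {n : ℕ} (f : Fin (n - k) → Fin k) :
    Fin n ≃o (Finset.univ.image (key k f) : Finset ℕ) :=
  Finset.orderIsoOfFin _ (by
    rw [Finset.card_image_of_injective _ (key_inj f), Finset.card_univ, Fintype.card_fin])

noncomputable def permFun (k : ℕ) {n : ℕ} (f : Fin (n - k) → Fin k) (i : Fin n) : Fin n :=
  (sortIso k f).symm ⟨key k f i, Finset.mem_image_of_mem _ (Finset.mem_univ i)⟩

lemma permFun_lt_iff (f : Fin (n - k) → Fin k) (i j : Fin n) :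
    permFun k f i < permFun k f j ↔ key k f i < key k f j := by
  unfold permFun
  rw [OrderIso.lt_iff_lt]
  exact Subtype.mk_lt_mk

lemma permFun_inj (f : Fin (n - k) → Fin k) : Function.Injective (permFun k f) := by
  intro i j h
  exact key_inj f (Subtype.mk_eq_mk.mp ((sortIso k f).symm.injective h))

noncomputable def permOf (k : ℕ) {n : ℕ} (f : Fin (n - k) → Fin k) : Equiv.Perm (Fin n) :=
  Equiv.ofBijective _ (Finite.injective_iff_bijective.mp (permFun_inj f))

lemma permOf_apply (f : Fin (n - k) → Fin k) (i : Fin n) :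
    permOf k f i = permFun k f i := rfl

lemma a_lt_iff (f : Fin (n - k) → Fin k) (i j : Fin n) :
    ((permOf k f i : ℕ) : ℝ) < ((permOf k f j : ℕ) : ℝ) ↔ key k f i < key k f j := by
  rw [Nat.cast_lt, permOf_apply, permOf_apply, ← Fin.lt_def, permFun_lt_iff]

lemma incLen_permOf (hk : 0 < k) (f : Fin (n - k) → Fin k) (j : Fin n) (hj : k ≤ (j : ℕ)) :
    incLen (fun i => ((permOf k f i : ℕ) : ℝ)) j = lev k f j + 1 := by
  have hjn := j.isLt
  set a : Fin n → ℝ := fun i => ((permOf k f i : ℕ) : ℝ) with ha_def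
  have ha : ∀ i i' : Fin n, a i < a i' ↔ key k f i < key k f i' := fun i i' => a_lt_iff f i i'
  unfold incLen
  congr 1
  set S := {m | ∃ σ : Fin (m + 1) → Fin n,
    StrictMono σ ∧ StrictMono (a ∘ σ) ∧ σ (Fin.last m) = j} with hS
  have hub : ∀ m ∈ S, m ≤ lev k f j := by
    rintro m ⟨σ, hσ, haσ, hlast⟩
    have hmono : ∀ p q : Fin (m + 1), p < q → lev k f (σ p) < lev k f (σ q) := by
      intro p q hpq
      exact lev_lt_of_key_lt f (hσ hpq) ((ha _ _).mp (haσ hpq))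
    have hstep : ∀ t (ht : t < m + 1), t ≤ lev k f (σ ⟨t, ht⟩) := by
      intro t
      induction t with
      | zero => intro ht; exact Nat.zero_le _
      | succ t ih =>
        intro ht
        have h1 := ih (by omega)
        have h2 := hmono ⟨t, by omega⟩ ⟨t + 1, ht⟩ (by simp [Fin.lt_def])
        omega
    have h3 := hstep m (by omega)
    rwa [show (⟨m, by omega⟩ : Fin (m + 1)) = Fin.last m from rfl, hlast] at h3
  have hlk : lev k f j < k := lev_lt hk f j
  have hmem : lev k f j ∈ S := by
    refine ⟨fun p => if h : (p : ℕ) < lev k f j then ⟨(p : ℕ), by omega⟩ else j, ?_, ?_, ?_⟩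
    · intro p q hpq
      have hpq' : (p : ℕ) < (q : ℕ) := hpq
      dsimp only
      by_cases hq : (q : ℕ) < lev k f j
      · rw [dif_pos (by omega), dif_pos hq]
        exact Fin.mk_lt_mk.mpr hpq'
      · rw [dif_neg hq]
        by_cases hp : (p : ℕ) < lev k f j
        · rw [dif_pos hp]
          rw [Fin.lt_def]
          simp only [Fin.val_mk]
          omega
        · exfalso
          have := p.isLt
          have := q.isLt
          omega
    · intro p q hpq
      have hpq' : (p : ℕ) < (q : ℕ) := hpq
      show a _ < a _
      dsimp only
      rw [ha]
      by_cases hq : (q : ℕ) < lev k f j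
      · rw [dif_pos (by omega), dif_pos hq]
        apply key_lt_of_lev_lt
        have e1 : lev k f ⟨(p : ℕ), by omega⟩ = (p : ℕ) := by
          unfold lev; rw [dif_pos (by simp only [Fin.val_mk]; omega)]
        have e2 : lev k f ⟨(q : ℕ), by omega⟩ = (q : ℕ) := by
          unfold lev; rw [dif_pos (by simp only [Fin.val_mk]; omega)]
        rw [e1, e2]; exact hpq'
      · rw [dif_neg hq]
        by_cases hp : (p : ℕ) < lev k f j
        · rw [dif_pos hp]
          apply key_lt_of_lev_lt
          have e1 : lev k f ⟨(p : ℕ), by omega⟩ = (p : ℕ) := by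
            unfold lev; rw [dif_pos (by simp only [Fin.val_mk]; omega)]
          rw [e1]; exact hp
        · exfalso
          have := p.isLt
          have := q.isLt
          omega
    · simp [Fin.last]
  have hbdd : BddAbove S := ⟨lev k f j, fun m hm => hub m hm⟩
  exact le_antisymm (csSup_le ⟨lev k f j, hmem⟩ hub) (le_csSup hbdd hmem)

lemma est_inj (hk : 0 < k) :
    Function.Injective (fun f : Fin (n - k) → Fin k =>
      (fun i => (incLen (fun j => ((permOf k f j : ℕ) : ℝ)) i,
                 decLen (fun j => ((permOf k f j : ℕ) : ℝ)) i) : Fin n → ℕ × ℕ)) := by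
  intro f g h
  funext t
  have ht : k + (t : ℕ) < n := by have := t.isLt; omega
  have h1 := congrFun h (⟨k + (t : ℕ), ht⟩ : Fin n)
  have h2 := congrArg Prod.fst h1
  simp only at h2
  rw [incLen_permOf hk f _ (by simp), incLen_permOf hk g _ (by simp)] at h2
  have hlev : ∀ u : Fin (n - k) → Fin k, lev k u (⟨k + (t : ℕ), ht⟩ : Fin n) = (u t : ℕ) := by
    intro u
    unfold lev
    rw [dif_neg (by simp)]
    congr 1
    apply Fin.ext
    simp
  rw [hlev f, hlev g] at h2
  exact Fin.ext (by omega)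

end ESTaux

theorem num_ests_lower_bound (n k : ℕ) (hk : k ≤ n) :
    k ^ (n - k) ≤
      (Finset.univ.image (fun A : Equiv.Perm (Fin n) =>
        (fun i => (incLen (fun j => ((A j : ℕ) : ℝ)) i,
                   decLen (fun j => ((A j : ℕ) : ℝ)) i) : Fin n → ℕ × ℕ))).card := by
  rcases Nat.eq_zero_or_pos k with rfl | hkpos
  · rcases Nat.eq_zero_or_pos n with rfl | hn
    · have hne : (Finset.univ.image (fun A : Equiv.Perm (Fin 0) =>
          (fun i => (incLen (fun j => ((A j : ℕ) : ℝ)) i,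
                     decLen (fun j => ((A j : ℕ) : ℝ)) i) : Fin 0 → ℕ × ℕ))).Nonempty :=
        Finset.image_nonempty.mpr Finset.univ_nonempty
      simpa using Finset.card_pos.mpr hne
    · rw [Nat.sub_zero, Nat.zero_pow hn]
      exact Nat.zero_le _
  · have hcard : k ^ (n - k) = (Finset.univ : Finset (Fin (n - k) → Fin k)).card := by
      rw [Finset.card_univ, Fintype.card_fun, Fintype.card_fin, Fintype.card_fin]
    rw [hcard]
    apply Finset.card_le_card_of_injOn (fun f : Fin (n - k) → Fin k =>
      (fun i => (incLen (fun j => ((ESTaux.permOf k f j : ℕ) : ℝ)) i,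
                 decLen (fun j => ((ESTaux.permOf k f j : ℕ) : ℝ)) i) : Fin n → ℕ × ℕ))
    · intro f _
      exact Finset.mem_image_of_mem _ (Finset.mem_univ (ESTaux.permOf k f))
    · exact (ESTaux.est_inj hkpos).injOn
end
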